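/- arXiv:1401.7264 — 3 statements merged into one kernel-verified Lean document; each statement's English description precedes it below -/
import Mathlib

section
/- Let $U_1$ and $U_2$ be real random variables with density functions $f_{U_1}$ and $f_{U_2}$, and let $S$ be a measurable set with $\int_S f_{U_1} > 0$ and $\int_S f_{U_2} > 0$. Let $W_1$ and $W_2$ have the distributions of $U_1$ and $U_2$ conditioned to lie in $S$. Then $d_{TV}(W_1, W_2) \leq d_{TV}(U_1, U_2) / \min(\int_S f_{U_1}, \int_S f_{U_2})$. -/
/-!
The density `S.indicator f / ∫_S f` describes the conditional measure
`μ[|S] = (μ S)⁻¹ • μ.restrict S` of `μ = f · volume`. For a test set `A`, both `S ∩ A` and `S \ A` are test sets for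
`d_TV(μ, ν)`, so `p = μ (S ∩ A)`, `q = ν (S ∩ A)` satisfy `|p - q| ≤ D` and
`|(μ S - p) - (ν S - q)| ≤ D`; elementary algebra then bounds `|p / μ S - q / ν S|` by
`D / min (μ S) (ν S)`.
-/

open MeasureTheory

/-- Total variation distance between two measures. -/
noncomputable def tvDist {Ω : Type*} [MeasurableSpace Ω] (μ ν : Measure Ω) : ℝ :=
  ⨆ A : {A : Set Ω // MeasurableSet A}, |(μ A.1).toReal - (ν A.1).toReal|

open ProbabilityTheory ENNReal

/- For `a ≤ b`, write `p / a - q / b` both as `(p - q) / a + q (1 / a - 1 / b)`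
and as `(b - q) / b - (a - p) / a`; symmetrically for `b ≤ a`. -/
lemma abs_div_sub_div_le_div_min {a b p q D : ℝ} (ha : 0 < a) (hb : 0 < b)
    (hp : 0 ≤ p) (hq : 0 ≤ q) (hpa : p ≤ a) (hqb : q ≤ b)
    (hpq : |p - q| ≤ D) (hpq' : |(a - p) - (b - q)| ≤ D) :
    |p / a - q / b| ≤ D / min a b := by
  rw [abs_sub_le_iff] at hpq hpq'
  obtain ⟨hpq, hqp⟩ := hpq
  obtain ⟨hrest, hrest'⟩ := hpq'
  rw [abs_sub_le_iff]
  constructor <;> rcases le_total a b with h | h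
  · rw [min_eq_left h, div_sub_div _ _ ha.ne' hb.ne', div_le_div_iff₀ (by positivity) ha]
    nlinarith [mul_nonneg (mul_nonneg (sub_nonneg.2 hqb) (sub_nonneg.2 h)) ha.le,
      mul_le_mul_of_nonneg_right (mul_le_mul_of_nonneg_left hrest' hb.le) ha.le]
  · rw [min_eq_right h, div_sub_div _ _ ha.ne' hb.ne', div_le_div_iff₀ (by positivity) hb]
    nlinarith [mul_nonneg (mul_nonneg hp (sub_nonneg.2 h)) hb.le,
      mul_le_mul_of_nonneg_right (mul_le_mul_of_nonneg_left hpq ha.le) hb.le]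
  · rw [min_eq_left h, div_sub_div _ _ hb.ne' ha.ne', div_le_div_iff₀ (by positivity) ha]
    nlinarith [mul_nonneg (mul_nonneg hq (sub_nonneg.2 h)) ha.le,
      mul_le_mul_of_nonneg_right (mul_le_mul_of_nonneg_left hqp hb.le) ha.le]
  · rw [min_eq_right h, div_sub_div _ _ hb.ne' ha.ne', div_le_div_iff₀ (by positivity) hb]
    nlinarith [mul_nonneg (mul_nonneg (sub_nonneg.2 hpa) (sub_nonneg.2 h)) hb.le,
      mul_le_mul_of_nonneg_right (mul_le_mul_of_nonneg_left hrest ha.le) hb.le]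

section tvDist

variable {Ω : Type*} [MeasurableSpace Ω] {μ ν : Measure Ω} [IsFiniteMeasure μ] [IsFiniteMeasure ν]

lemma bddAbove_range_abs_measureReal_sub :
    BddAbove (Set.range fun A : {A : Set Ω // MeasurableSet A} => |μ.real A - ν.real A|) := by
  refine ⟨μ.real Set.univ + ν.real Set.univ, ?_⟩
  rintro _ ⟨A, rfl⟩
  refine (abs_sub _ _).trans (add_le_add ?_ ?_) <;>
    rw [abs_of_nonneg measureReal_nonneg] <;> exact measureReal_mono (Set.subset_univ _)

lemma abs_measureReal_sub_le_tvDist {A : Set Ω} (hA : MeasurableSet A) :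
    |μ.real A - ν.real A| ≤ tvDist μ ν :=
  le_ciSup bddAbove_range_abs_measureReal_sub (⟨A, hA⟩ : {A : Set Ω // MeasurableSet A})

omit [IsFiniteMeasure μ] in
lemma measureReal_cond {S : Set Ω} (hS : MeasurableSet S) (A : Set Ω) :
    μ[|S].real A = μ.real (S ∩ A) / μ.real S := by
  rw [measureReal_def, cond_apply hS, toReal_mul, toReal_inv, div_eq_inv_mul]
  rfl

theorem tvDist_cond_le {S : Set Ω} (hS : MeasurableSet S) (hμS : μ S ≠ 0) (hνS : ν S ≠ 0) :
    tvDist μ[|S] ν[|S] ≤ tvDist μ ν / min (μ.real S) (ν.real S) := by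
  refine ciSup_le fun ⟨A, hA⟩ => ?_
  have hSA : MeasurableSet (S ∩ A) := hS.inter hA
  have hcompl := abs_measureReal_sub_le_tvDist (μ := μ) (ν := ν) (hS.diff hSA)
  rw [measureReal_sdiff Set.inter_subset_left hSA, measureReal_sdiff Set.inter_subset_left hSA]
    at hcompl
  change |μ[|S].real A - ν[|S].real A| ≤ _
  rw [measureReal_cond hS, measureReal_cond hS]
  exact abs_div_sub_div_le_div_min (toReal_pos hμS (measure_ne_top μ S))
    (toReal_pos hνS (measure_ne_top ν S))
    measureReal_nonneg measureReal_nonneg (measureReal_mono Set.inter_subset_left)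
    (measureReal_mono Set.inter_subset_left) (abs_measureReal_sub_le_tvDist hSA) hcompl

end tvDist

section withDensity

variable {Ω : Type*} [MeasurableSpace Ω] {μ : Measure Ω} {f : Ω → ℝ} {S : Set Ω}

lemma withDensity_ofReal_apply_eq_ofReal_setIntegral (hS : MeasurableSet S) (hf : 0 ≤ f)
    (hfS : IntegrableOn f S μ) :
    μ.withDensity (fun x => ENNReal.ofReal (f x)) S = ENNReal.ofReal (∫ x in S, f x ∂μ) := by
  rw [withDensity_apply _ hS, ofReal_integral_eq_lintegral_ofReal hfS (ae_of_all _ hf)]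

lemma withDensity_ofReal_indicator_div_eq_cond (hS : MeasurableSet S) (hf : 0 ≤ f)
    (hfS : 0 < ∫ x in S, f x ∂μ) :
    μ.withDensity (fun x => ENNReal.ofReal (S.indicator f x / ∫ y in S, f y ∂μ)) =
      (μ.withDensity fun x => ENNReal.ofReal (f x))[|S] := by
  set c := ∫ y in S, f y ∂μ
  have hdensity : (fun x => ENNReal.ofReal (S.indicator f x / c)) =
      ENNReal.ofReal c⁻¹ • S.indicator fun x => ENNReal.ofReal (f x) := by
    ext x
    by_cases hx : x ∈ S
    · simp [hx, div_eq_mul_inv, ENNReal.ofReal_mul (hf x), mul_comm]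
    · simp [hx]
  rw [hdensity, withDensity_smul' _ _ ofReal_ne_top, withDensity_indicator hS,
    ← restrict_withDensity hS, ProbabilityTheory.cond,
    withDensity_ofReal_apply_eq_ofReal_setIntegral hS hf (Integrable.of_integral_ne_zero hfS.ne'),
    ofReal_inv_of_pos hfS]

end withDensity

theorem stmt_0_general (f₁ f₂ : ℝ → ℝ)
    (hf₁0 : ∀ x, 0 ≤ f₁ x) (hf₂0 : ∀ x, 0 ≤ f₂ x)
    (hf₁1 : ∫ x, f₁ x = 1) (hf₂1 : ∫ x, f₂ x = 1)
    (S : Set ℝ) (hS : MeasurableSet S)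
    (hS₁ : 0 < ∫ x in S, f₁ x) (hS₂ : 0 < ∫ x in S, f₂ x)
    (U₁ U₂ W₁ W₂ : Measure ℝ)
    (hU₁ : U₁ = volume.withDensity (fun x => ENNReal.ofReal (f₁ x)))
    (hU₂ : U₂ = volume.withDensity (fun x => ENNReal.ofReal (f₂ x)))
    (hW₁ : W₁ = volume.withDensity
      (fun x => ENNReal.ofReal (S.indicator f₁ x / ∫ y in S, f₁ y)))
    (hW₂ : W₂ = volume.withDensity
      (fun x => ENNReal.ofReal (S.indicator f₂ x / ∫ y in S, f₂ y))) :
    tvDist W₁ W₂ ≤ tvDist U₁ U₂ / min (∫ x in S, f₁ x) (∫ x in S, f₂ x) := by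
  have hi₁ : Integrable f₁ := Integrable.of_integral_ne_zero (by simp [hf₁1])
  have hi₂ : Integrable f₂ := Integrable.of_integral_ne_zero (by simp [hf₂1])
  have : IsFiniteMeasure U₁ := hU₁ ▸ isFiniteMeasure_withDensity_ofReal hi₁.2
  have : IsFiniteMeasure U₂ := hU₂ ▸ isFiniteMeasure_withDensity_ofReal hi₂.2
  have hU₁S : U₁ S = ENNReal.ofReal (∫ x in S, f₁ x) :=
    hU₁ ▸ withDensity_ofReal_apply_eq_ofReal_setIntegral hS hf₁0 hi₁.integrableOn
  have hU₂S : U₂ S = ENNReal.ofReal (∫ x in S, f₂ x) :=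
    hU₂ ▸ withDensity_ofReal_apply_eq_ofReal_setIntegral hS hf₂0 hi₂.integrableOn
  rw [hW₁, hW₂, withDensity_ofReal_indicator_div_eq_cond hS hf₁0 hS₁,
    withDensity_ofReal_indicator_div_eq_cond hS hf₂0 hS₂, ← hU₁, ← hU₂]
  have h := tvDist_cond_le (μ := U₁) (ν := U₂) hS (by simp [hU₁S, hS₁]) (by simp [hU₂S, hS₂])
  rwa [measureReal_def, measureReal_def, hU₁S, hU₂S, toReal_ofReal hS₁.le,
    toReal_ofReal hS₂.le] at h

theorem stmt_0 (f₁ f₂ : ℝ → ℝ) (hf₁ : Measurable f₁) (hf₂ : Measurable f₂)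
    (hf₁0 : ∀ x, 0 ≤ f₁ x) (hf₂0 : ∀ x, 0 ≤ f₂ x)
    (hf₁1 : ∫ x, f₁ x = 1) (hf₂1 : ∫ x, f₂ x = 1)
    (S : Set ℝ) (hS : MeasurableSet S)
    (hS₁ : 0 < ∫ x in S, f₁ x) (hS₂ : 0 < ∫ x in S, f₂ x)
    (U₁ U₂ W₁ W₂ : Measure ℝ)
    (hU₁ : U₁ = volume.withDensity (fun x => ENNReal.ofReal (f₁ x)))
    (hU₂ : U₂ = volume.withDensity (fun x => ENNReal.ofReal (f₂ x)))
    (hW₁ : W₁ = volume.withDensity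
      (fun x => ENNReal.ofReal (S.indicator f₁ x / ∫ y in S, f₁ y)))
    (hW₂ : W₂ = volume.withDensity
      (fun x => ENNReal.ofReal (S.indicator f₂ x / ∫ y in S, f₂ y))) :
    tvDist W₁ W₂ ≤ tvDist U₁ U₂ / min (∫ x in S, f₁ x) (∫ x in S, f₂ x) :=
  stmt_0_general f₁ f₂ hf₁0 hf₂0 hf₁1 hf₂1 S hS hS₁ hS₂ U₁ U₂ W₁ W₂ hU₁ hU₂ hW₁ hW₂
end

section
/- Let $U_1 \sim Normal(m_1, \tilde\sigma^2)$ and $U_2 \sim Normal(m_2, \tilde\sigma^2)$ where $m_\ell = (\sigma^{-2} + n\gamma^2)^{-1}(\sigma^{-2} y + \gamma^2 s_\ell)$ for $\ell=1,2$, with $\tilde\sigma^2 = (\sigma^{-2}+n\gamma^2)^{-1}$. Let $W_1, W_2$ be $U_1, U_2$ conditioned to lie in $[0,1]$. If $|m_1|, |m_2| \leq \zeta$ for some $\zeta \geq 0$, then $d_{TV}(W_1, W_2) \leq e^{(\zeta+1)^2/(2\tilde\sigma^2)} \cdot \tilde\sigma^2 \gamma^2 |s_1 - s_2|$. -/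
/-!
Conditioning on `[0, 1]` costs at most a factor `1 / P[U ∈ [0, 1]]`, and since the Gaussian
density on `[0, 1]` is at least `(2πσ̃²)^{-1/2} e^{-(ζ+1)²/(2σ̃²)}` when `|m| ≤ ζ`, that factor is
at most `√(2πσ̃²) e^{(ζ+1)²/(2σ̃²)}`. Two Gaussians with the same variance differ most on the
half-line left of the midpoint of their means; there the difference is the mass of an interval of
length `|m₁ - m₂|`, so it is at most `|m₁ - m₂| / √(2πσ̃²)`. Finally `m₁ - m₂ = σ̃² γ² (s₁ - s₂)`.
-/

open MeasureTheory ProbabilityTheory Real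
open scoped NNReal ENNReal
open Set

lemma abs_inv_add_mul_sub_inv_add_mul_le {a a' b b' K : ℝ} (hb : 0 ≤ b) (hb' : 0 ≤ b')
    (ha : 0 < a + a') (hb_pos : 0 < b + b') (h : |a - b| ≤ K) (h' : |a' - b'| ≤ K) :
    |(a + a')⁻¹ * a - (b + b')⁻¹ * b| ≤ K / (a + a') := by
  have h_num : |a * b' - a' * b| ≤ K * (b + b') :=
    calc |a * b' - a' * b| = |(a - b) * b' + b * (b' - a')| := by ring_nf
      _ ≤ |a - b| * b' + b * |a' - b'| := by
        rw [abs_sub_comm a' b']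
        refine (abs_add_le _ _).trans_eq ?_
        rw [abs_mul, abs_mul, abs_of_nonneg hb', abs_of_nonneg hb]
      _ ≤ K * (b + b') := by nlinarith
  calc |(a + a')⁻¹ * a - (b + b')⁻¹ * b| = |a * b' - a' * b| / ((a + a') * (b + b')) := by
        rw [← abs_of_pos (mul_pos ha hb_pos), ← abs_div]
        congr 1
        field_simp
        ring
    _ ≤ K * (b + b') / ((a + a') * (b + b')) := by gcongr
    _ = K / (a + a') := by field_simp

lemma setIntegral_le_setIntegral_of_nonneg_of_nonpos {α : Type*} [MeasurableSpace α]
    {μ : Measure α} {g : α → ℝ} {s t : Set α} (hg : Integrable g μ) (hs : MeasurableSet s)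
    (ht : MeasurableSet t) (hg_pos : ∀ x ∈ t, 0 ≤ g x) (hg_neg : ∀ x ∉ t, g x ≤ 0) :
    ∫ x in s, g x ∂μ ≤ ∫ x in t, g x ∂μ := by
  rw [← integral_inter_add_sdiff ht hg.integrableOn]
  have h_diff : ∫ x in s \ t, g x ∂μ ≤ 0 :=
    setIntegral_nonpos (hs.diff ht) fun x hx => hg_neg x hx.2
  have h_inter : ∫ x in s ∩ t, g x ∂μ ≤ ∫ x in t, g x ∂μ :=
    setIntegral_mono_set hg.integrableOn
      ((ae_restrict_iff' ht).2 (ae_of_all _ hg_pos)) inter_subset_right.eventuallyLE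
  linarith

namespace ProbabilityTheory

variable {m m₁ m₂ : ℝ} {v : ℝ≥0}

lemma gaussianPDFReal_le_of_sq_le {m' x x' : ℝ} (h : (x - m) ^ 2 ≤ (x' - m') ^ 2) :
    gaussianPDFReal m' v x' ≤ gaussianPDFReal m v x := by
  rw [gaussianPDFReal, gaussianPDFReal]
  gcongr

lemma gaussianPDFReal_le (x : ℝ) : gaussianPDFReal m v x ≤ (√(2 * π * v))⁻¹ := by
  simpa [gaussianPDFReal] using gaussianPDFReal_le_of_sq_le (v := v) (x := m) (m := m) (x' := x)
    (m' := m) (by simp [sq_nonneg])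

lemma gaussianReal_real_eq_integral (hv : v ≠ 0) (s : Set ℝ) :
    (gaussianReal m v).real s = ∫ x in s, gaussianPDFReal m v x := by
  rw [measureReal_def, gaussianReal_apply_eq_integral m hv s,
    ENNReal.toReal_ofReal (integral_nonneg fun x => gaussianPDFReal_nonneg _ _ _)]

lemma gaussianReal_real_le {s : Set ℝ} (hv : v ≠ 0) (hs : MeasurableSet s)
    (hs' : volume s ≠ ∞) : (gaussianReal m v).real s ≤ (√(2 * π * v))⁻¹ * volume.real s := by
  rw [gaussianReal_real_eq_integral hv, mul_comm, ← smul_eq_mul, ← setIntegral_const]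
  exact setIntegral_mono_on (integrable_gaussianPDFReal m v).integrableOn
    (integrableOn_const hs') hs fun x _ => gaussianPDFReal_le x

lemma le_gaussianReal_real {s : Set ℝ} {R : ℝ} (hv : v ≠ 0) (hs : MeasurableSet s)
    (hs' : volume s ≠ ∞) (hsR : s ⊆ Metric.closedBall m R) :
    (√(2 * π * v))⁻¹ * rexp (-R ^ 2 / (2 * v)) * volume.real s ≤ (gaussianReal m v).real s := by
  rw [gaussianReal_real_eq_integral hv]
  refine setIntegral_ge_of_const_le_real hs hs' (fun x hx => ?_)
    (integrable_gaussianPDFReal m v).integrableOn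
  have hxR : |x - m| ≤ R := hsR hx
  simpa [gaussianPDFReal] using gaussianPDFReal_le_of_sq_le (v := v) (x' := m + R) (m' := m)
    (by simpa using sq_le_sq' (abs_le.1 hxR).1 (abs_le.1 hxR).2)

lemma gaussianReal_real_Iic_sub_add (c : ℝ) {δ : ℝ} (hδ : 0 ≤ δ) :
    (gaussianReal m v).real (Iic c) - (gaussianReal (m + δ) v).real (Iic c)
      = (gaussianReal m v).real (Ioc (c - δ) c) := by
  have h_shift : (gaussianReal (m + δ) v).real (Iic c) = (gaussianReal m v).real (Iic (c - δ)) := by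
    rw [← gaussianReal_map_add_const,
      map_measureReal_apply (measurable_add_const δ) measurableSet_Iic]
    congr 1
    ext x
    simp [le_sub_iff_add_le]
  rw [h_shift, ← Iic_union_Ioc_eq_Iic (by linarith : c - δ ≤ c),
    measureReal_union (Iic_disjoint_Ioc le_rfl) measurableSet_Ioc]
  ring

lemma gaussianReal_real_sub_le_of_le (hv : v ≠ 0) (h : m₁ ≤ m₂) {s : Set ℝ}
    (hs : MeasurableSet s) :
    (gaussianReal m₁ v).real s - (gaussianReal m₂ v).real s ≤ (√(2 * π * v))⁻¹ * (m₂ - m₁) := by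
  set c := (m₁ + m₂) / 2
  have h_sub (t : Set ℝ) : (gaussianReal m₁ v).real t - (gaussianReal m₂ v).real t
      = ∫ x in t, (gaussianPDFReal m₁ v x - gaussianPDFReal m₂ v x) := by
    rw [integral_sub (integrable_gaussianPDFReal m₁ v).integrableOn
      (integrable_gaussianPDFReal m₂ v).integrableOn, gaussianReal_real_eq_integral hv,
      gaussianReal_real_eq_integral hv]
  -- the density difference is nonnegative exactly left of the midpoint `c`
  have h_Iic : (gaussianReal m₁ v).real s - (gaussianReal m₂ v).real s
      ≤ (gaussianReal m₁ v).real (Iic c) - (gaussianReal m₂ v).real (Iic c) := by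
    rw [h_sub, h_sub]
    refine setIntegral_le_setIntegral_of_nonneg_of_nonpos
      ((integrable_gaussianPDFReal m₁ v).sub (integrable_gaussianPDFReal m₂ v)) hs
      measurableSet_Iic (fun x hx => ?_) (fun x hx => ?_)
    · have : x ≤ (m₁ + m₂) / 2 := hx
      exact sub_nonneg.2 (gaussianPDFReal_le_of_sq_le (by nlinarith))
    · have : (m₁ + m₂) / 2 < x := not_le.1 hx
      exact sub_nonpos.2 (gaussianPDFReal_le_of_sq_le (by nlinarith))
  calc _ ≤ _ := h_Iic
    _ = (gaussianReal m₁ v).real (Ioc (c - (m₂ - m₁)) c) := by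
      simpa using gaussianReal_real_Iic_sub_add (m := m₁) (v := v) c (sub_nonneg.2 h)
    _ ≤ (√(2 * π * v))⁻¹ * (m₂ - m₁) := by
      have := gaussianReal_real_le (m := m₁) hv measurableSet_Ioc
        (measure_Ioc_lt_top (a := c - (m₂ - m₁)) (b := c)).ne
      rwa [volume_real_Ioc_of_le (sub_le_self c (sub_nonneg.2 h)), sub_sub_cancel] at this

lemma abs_gaussianReal_real_sub_le (hv : v ≠ 0) {s : Set ℝ} (hs : MeasurableSet s) :
    |(gaussianReal m₁ v).real s - (gaussianReal m₂ v).real s| ≤ (√(2 * π * v))⁻¹ * |m₁ - m₂| := by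
  wlog h : m₁ ≤ m₂ generalizing m₁ m₂
  · rw [abs_sub_comm, abs_sub_comm m₁]
    exact this (le_of_not_ge h)
  have h_compl := gaussianReal_real_sub_le_of_le hv h hs.compl
  rw [probReal_compl_eq_one_sub hs, probReal_compl_eq_one_sub hs] at h_compl
  rw [abs_sub_comm m₁, abs_of_nonneg (sub_nonneg.2 h), abs_sub_le_iff]
  exact ⟨gaussianReal_real_sub_le_of_le hv h hs, by linarith⟩

lemma abs_cond_real_sub_le {Ω : Type*} [MeasurableSpace Ω] {μ ν : Measure Ω} [IsFiniteMeasure μ]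
    [IsFiniteMeasure ν] {s : Set Ω} (hs : MeasurableSet s) {K L : ℝ} (hL : 0 < L)
    (hμs : L ≤ μ.real s) (hνs : L ≤ ν.real s)
    (hK : ∀ t, MeasurableSet t → |μ.real t - ν.real t| ≤ K) {A : Set Ω} (hA : MeasurableSet A) :
    |μ[|s].real A - ν[|s].real A| ≤ K / L := by
  have h_cond (ρ : Measure Ω) [IsFiniteMeasure ρ] :
      ρ[|s].real A = (ρ.real (s ∩ A) + ρ.real (s \ A))⁻¹ * ρ.real (s ∩ A) := by
    rw [measureReal_inter_add_sdiff hA, measureReal_def, cond_apply hs, ENNReal.toReal_mul,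
      ENNReal.toReal_inv]
    rfl
  have hμ_split := measureReal_inter_add_sdiff (μ := μ) (s := s) hA
  have hν_split := measureReal_inter_add_sdiff (μ := ν) (s := s) hA
  rw [h_cond, h_cond]
  refine (abs_inv_add_mul_sub_inv_add_mul_le measureReal_nonneg measureReal_nonneg
    (by linarith) (by linarith) (hK _ (hs.inter hA)) (hK _ (hs.diff hA))).trans ?_
  have hK_nonneg : 0 ≤ K := (abs_nonneg _).trans (hK s hs)
  gcongr
  linarith

end ProbabilityTheory

lemma tvDist_le_of_forall_abs_sub_le {Ω : Type*} [MeasurableSpace Ω] {μ ν : Measure Ω} {K : ℝ}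
    (h : ∀ A, MeasurableSet A → |μ.real A - ν.real A| ≤ K) : tvDist μ ν ≤ K :=
  have : Nonempty {A : Set Ω // MeasurableSet A} := ⟨⟨∅, .empty⟩⟩
  ciSup_le fun A => h A.1 A.2

lemma tvDist_cond_Icc_gaussianReal_le {m₁ m₂ ζ : ℝ} {v : ℝ≥0} (hv : v ≠ 0) (h₁ : |m₁| ≤ ζ)
    (h₂ : |m₂| ≤ ζ) :
    tvDist (gaussianReal m₁ v)[|Icc 0 1] (gaussianReal m₂ v)[|Icc 0 1]
      ≤ rexp ((ζ + 1) ^ 2 / (2 * v)) * |m₁ - m₂| := by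
  have h_mass {m : ℝ} (hm : |m| ≤ ζ) :
      (√(2 * π * v))⁻¹ * rexp (-(ζ + 1) ^ 2 / (2 * v)) ≤ (gaussianReal m v).real (Icc 0 1) := by
    have h_ball : Icc (0 : ℝ) 1 ⊆ Metric.closedBall m (ζ + 1) := fun x hx => by
      rw [Metric.mem_closedBall, dist_eq_norm, norm_eq_abs, abs_le]
      have := abs_le.1 hm
      constructor <;> linarith [hx.1, hx.2]
    simpa using le_gaussianReal_real hv measurableSet_Icc measure_Icc_lt_top.ne h_ball
  refine tvDist_le_of_forall_abs_sub_le fun A hA =>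
    (abs_cond_real_sub_le measurableSet_Icc (by positivity) (h_mass h₁) (h_mass h₂)
      (fun t ht => abs_gaussianReal_real_sub_le hv ht) hA).trans_eq ?_
  rw [neg_div, exp_neg]
  field_simp

theorem stmt_14_general (σ γ y s₁ s₂ ζ : ℝ) (hσ : 0 < σ) (n : ℕ)
    (σt2 m₁ m₂ : ℝ)
    (hσt2 : σt2 = (σ⁻¹^2 + n * γ^2)⁻¹)
    (hm₁ : m₁ = (σ⁻¹^2 + n * γ^2)⁻¹ * (σ⁻¹^2 * y + γ^2 * s₁))
    (hm₂ : m₂ = (σ⁻¹^2 + n * γ^2)⁻¹ * (σ⁻¹^2 * y + γ^2 * s₂))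
    (hm₁ζ : |m₁| ≤ ζ) (hm₂ζ : |m₂| ≤ ζ)
    (W₁ W₂ : Measure ℝ)
    (hW₁ : W₁ = (gaussianReal m₁ σt2.toNNReal)[|Set.Icc (0:ℝ) 1])
    (hW₂ : W₂ = (gaussianReal m₂ σt2.toNNReal)[|Set.Icc (0:ℝ) 1]) :
    tvDist W₁ W₂ ≤ Real.exp ((ζ + 1)^2 / (2 * σt2)) * σt2 * γ^2 * |s₁ - s₂| := by
  have hσt2_pos : 0 < σt2 := hσt2 ▸ by positivity
  have h_means : |m₁ - m₂| = σt2 * γ ^ 2 * |s₁ - s₂| := by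
    rw [show m₁ - m₂ = σt2 * γ ^ 2 * (s₁ - s₂) by rw [hm₁, hm₂, hσt2]; ring, abs_mul,
      abs_of_nonneg (by positivity)]
  subst hW₁ hW₂
  have h := tvDist_cond_Icc_gaussianReal_le (Real.toNNReal_pos.2 hσt2_pos).ne' hm₁ζ hm₂ζ
  rwa [Real.coe_toNNReal _ hσt2_pos.le, h_means, ← mul_assoc, ← mul_assoc] at h

theorem stmt_14 (σ γ y s₁ s₂ ζ : ℝ) (hσ : 0 < σ) (hγ : 0 < γ) (n : ℕ) (hn : 1 ≤ n)
    (hζ : 0 ≤ ζ)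
    (σt2 m₁ m₂ : ℝ)
    (hσt2 : σt2 = (σ⁻¹^2 + n * γ^2)⁻¹)
    (hm₁ : m₁ = (σ⁻¹^2 + n * γ^2)⁻¹ * (σ⁻¹^2 * y + γ^2 * s₁))
    (hm₂ : m₂ = (σ⁻¹^2 + n * γ^2)⁻¹ * (σ⁻¹^2 * y + γ^2 * s₂))
    (hm₁ζ : |m₁| ≤ ζ) (hm₂ζ : |m₂| ≤ ζ)
    (W₁ W₂ : Measure ℝ)
    (hW₁ : W₁ = (gaussianReal m₁ σt2.toNNReal)[|Set.Icc (0:ℝ) 1])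
    (hW₂ : W₂ = (gaussianReal m₂ σt2.toNNReal)[|Set.Icc (0:ℝ) 1]) :
    tvDist W₁ W₂ ≤ Real.exp ((ζ + 1)^2 / (2 * σt2)) * σt2 * γ^2 * |s₁ - s₂| :=
  stmt_14_general σ γ y s₁ s₂ ζ hσ n σt2 m₁ m₂ hσt2 hm₁ hm₂ hm₁ζ hm₂ζ W₁ W₂ hW₁ hW₂
end

section
/- (Gibbs' Wasserstein contraction, one-step) Consider the Gibbs sampler on $[0,1]^N$ that at each step selects a coordinate $i$ uniformly at random and resamples $x_i$ from a Normal distribution with mean $(\sigma^{-2}+n_i\gamma^2)^{-1}(\sigma^{-2}y_i + \gamma^2\sum_{j\sim i}x_j)$ and variance $(\sigma^{-2}+n_i\gamma^2)^{-1}$, truncated to $[0,1]$. With the metric $d(x,z)=\sum_i n_i|x_i - z_i|$, there exists a coupling of one step of two copies of the chain from states $x$ and $z$ such that the expected distance after one step is at most $(1 - N^{-1}(1+n_{max}\gamma^2\sigma^2)^{-1})\, d(x,z)$. -/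
/-!
Couple the two chains by letting them update the same site `i`, and couple the two resampled
values by the quantile coupling. Gaussian densities have monotone likelihood ratio, so for means
`a ≤ b` the truncated law with mean `b` stochastically dominates the one with mean `a`, while by
translation it is dominated by the latter shifted by `b - a`; hence the quantile coupling keeps the
new values within `|a - b|` of each other. Here `a - b = (σ⁻² + nᵢγ²)⁻¹ γ² ∑_{j∼i} (xⱼ - zⱼ)` and
`nᵢ (σ⁻² + nᵢγ²)⁻¹ γ² ≤ 1 - (1 + n_max γ² σ²)⁻¹`; averaging over `i`, the symmetry of `∼` turns
`∑ᵢ ∑_{j∼i}` into `∑ⱼ nⱼ`, which gives the contraction factor.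
-/

open MeasureTheory ProbabilityTheory Set Filter
open scoped ENNReal NNReal

namespace ProbabilityTheory

/-- Only the values on `(0, 1)` are meaningful: for `u ≤ 0` this is `sInf univ = 0`. -/
noncomputable def quantile (μ : Measure ℝ) (u : ℝ) : ℝ := sInf {t | u ≤ cdf μ t}

section Quantile

variable {μ ν : Measure ℝ} {u t : ℝ}

lemma bddBelow_setOf_le_cdf (hu : 0 < u) : BddBelow {t | u ≤ cdf μ t} := by
  obtain ⟨t₀, ht₀⟩ := eventually_atBot.1 ((tendsto_cdf_atBot μ).eventually (gt_mem_nhds hu))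
  refine ⟨t₀, fun t ht => ?_⟩
  by_contra! h
  exact (ht₀ t h.le).not_ge ht

lemma nonempty_setOf_le_cdf (hu : u < 1) : {t | u ≤ cdf μ t}.Nonempty :=
  let ⟨t, ht⟩ := ((tendsto_cdf_atTop μ).eventually (lt_mem_nhds hu)).exists
  ⟨t, le_of_lt ht⟩

lemma le_cdf_quantile (hu : u ∈ Ioo 0 1) : u ≤ cdf μ (quantile μ u) := by
  refine ge_of_tendsto ((cdf μ).right_continuous _ |>.mono Ioi_subset_Ici_self)
    (eventually_nhdsWithin_of_forall fun t ht => ?_)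
  obtain ⟨s, hs, hst⟩ := exists_lt_of_csInf_lt (nonempty_setOf_le_cdf hu.2) ht
  exact hs.trans (monotone_cdf μ hst.le)

lemma quantile_le_iff (hu : u ∈ Ioo 0 1) : quantile μ u ≤ t ↔ u ≤ cdf μ t :=
  ⟨fun h => (le_cdf_quantile hu).trans (monotone_cdf μ h),
    fun h => csInf_le (bddBelow_setOf_le_cdf hu.1) h⟩

lemma monotoneOn_quantile : MonotoneOn (quantile μ) (Ioo 0 1) :=
  fun _ hu _ hu' h => (quantile_le_iff hu).2 (h.trans (le_cdf_quantile hu'))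

lemma aemeasurable_quantile : AEMeasurable (quantile μ) (volume.restrict (Ioo 0 1)) :=
  aemeasurable_restrict_of_monotoneOn measurableSet_Ioo monotoneOn_quantile

lemma map_quantile [IsProbabilityMeasure μ] :
    (volume.restrict (Ioo 0 1)).map (quantile μ) = μ := by
  refine (Measure.ext_of_Iic μ _ fun t => ?_).symm
  rw [Measure.map_apply_of_aemeasurable aemeasurable_quantile measurableSet_Iic,
    Measure.restrict_apply' measurableSet_Ioo, ← ofReal_cdf]
  have hpre : quantile μ ⁻¹' Iic t ∩ Ioo 0 1 = Ioo 0 1 ∩ Iic (cdf μ t) := by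
    ext u
    simp only [mem_inter_iff, mem_preimage, mem_Iic]
    exact ⟨fun h => ⟨h.2, (quantile_le_iff h.2).1 h.1⟩, fun h => ⟨(quantile_le_iff h.1).2 h.2, h.1⟩⟩
  rw [hpre]
  refine le_antisymm ?_ ?_
  · calc ENNReal.ofReal (cdf μ t) = volume (Ioo 0 (cdf μ t)) := by simp
      _ ≤ volume (Ioo 0 1 ∩ Iic (cdf μ t)) :=
          measure_mono fun u hu => ⟨⟨hu.1, hu.2.trans_le (cdf_le_one μ t)⟩, hu.2.le⟩
  · calc volume (Ioo 0 1 ∩ Iic (cdf μ t)) ≤ volume (Ioc 0 (cdf μ t)) :=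
          measure_mono fun u hu => ⟨hu.1.1, hu.2⟩
      _ = ENNReal.ofReal (cdf μ t) := by simp

lemma quantile_le_quantile_add {δ : ℝ} (h : ∀ t, cdf ν t ≤ cdf μ (t + δ))
    (hu : u ∈ Ioo 0 1) : quantile μ u ≤ quantile ν u + δ :=
  (quantile_le_iff hu).2 ((le_cdf_quantile hu).trans (h _))

end Quantile

def IsCoupling {α β : Type*} [MeasurableSpace α] [MeasurableSpace β] (κ : Measure (α × β))
    (μ : Measure α) (ν : Measure β) : Prop :=
  κ.map Prod.fst = μ ∧ κ.map Prod.snd = ν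

namespace IsCoupling

variable {α β α' β' ι : Type*} [MeasurableSpace α] [MeasurableSpace β] [MeasurableSpace α']
  [MeasurableSpace β'] {κ : Measure (α × β)} {μ : Measure α} {ν : Measure β}

lemma isProbabilityMeasure [IsProbabilityMeasure μ] (h : IsCoupling κ μ ν) :
    IsProbabilityMeasure κ :=
  ⟨by rw [← preimage_univ (f := Prod.fst), ← Measure.map_apply measurable_fst .univ, h.1,
    measure_univ]⟩

lemma map (h : IsCoupling κ μ ν) {f : α → α'} {g : β → β'} (hf : Measurable f)
    (hg : Measurable g) : IsCoupling (κ.map (Prod.map f g)) (μ.map f) (ν.map g) := by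
  constructor
  · rw [Measure.map_map measurable_fst (hf.prodMap hg), ← h.1,
      Measure.map_map hf measurable_fst]
    rfl
  · rw [Measure.map_map measurable_snd (hf.prodMap hg), ← h.2,
      Measure.map_map hg measurable_snd]
    rfl

lemma sum {s : Finset ι} {κ : ι → Measure (α × β)} {μ : ι → Measure α} {ν : ι → Measure β}
    (h : ∀ i ∈ s, IsCoupling (κ i) (μ i) (ν i)) :
    IsCoupling (∑ i ∈ s, κ i) (∑ i ∈ s, μ i) (∑ i ∈ s, ν i) := by
  constructor
  · rw [Measure.map_finset_sum measurable_fst.aemeasurable]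
    exact Finset.sum_congr rfl fun i hi => (h i hi).1
  · rw [Measure.map_finset_sum measurable_snd.aemeasurable]
    exact Finset.sum_congr rfl fun i hi => (h i hi).2

lemma smul (h : IsCoupling κ μ ν) (c : ℝ≥0∞) : IsCoupling (c • κ) (c • μ) (c • ν) :=
  ⟨by rw [Measure.map_smul, h.1], by rw [Measure.map_smul, h.2]⟩

end IsCoupling

lemma exists_isCoupling_abs_sub_le {μ ν : Measure ℝ} [IsProbabilityMeasure μ]
    [IsProbabilityMeasure ν] {δ : ℝ} (hμν : ∀ t, cdf μ t ≤ cdf ν (t + δ))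
    (hνμ : ∀ t, cdf ν t ≤ cdf μ (t + δ)) :
    ∃ κ, IsProbabilityMeasure κ ∧ IsCoupling κ μ ν ∧ ∀ᵐ p ∂κ, |p.1 - p.2| ≤ δ := by
  suffices ∃ κ, IsCoupling κ μ ν ∧ ∀ᵐ p ∂κ, |p.1 - p.2| ≤ δ from
    let ⟨κ, hκ, hδ⟩ := this; ⟨κ, hκ.isProbabilityMeasure, hκ, hδ⟩
  have hq := (aemeasurable_quantile (μ := μ)).prodMk (aemeasurable_quantile (μ := ν))
  refine ⟨(volume.restrict (Ioo 0 1)).map fun u => (quantile μ u, quantile ν u),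
    ⟨?_, ?_⟩, ?_⟩
  · rw [AEMeasurable.map_map_of_aemeasurable measurable_fst.aemeasurable hq]
    exact map_quantile
  · rw [AEMeasurable.map_map_of_aemeasurable measurable_snd.aemeasurable hq]
    exact map_quantile
  · rw [ae_map_iff hq (measurableSet_le (by fun_prop) measurable_const)]
    filter_upwards [ae_restrict_mem measurableSet_Ioo] with u hu
    exact abs_sub_le_iff.2
      ⟨sub_left_le_of_le_add (quantile_le_quantile_add hνμ hu),
        sub_left_le_of_le_add (quantile_le_quantile_add hμν hu)⟩

section Conditioning

variable {μ ν : Measure ℝ} [IsFiniteMeasure μ] [IsFiniteMeasure ν] {s : Set ℝ}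

lemma cdf_cond_eq_div (hs : MeasurableSet s) (hμs : μ s ≠ 0) (t : ℝ) :
    cdf (μ[|s]) t = μ.real (s ∩ Iic t) / μ.real s := by
  have := cond_isProbabilityMeasure hμs
  rw [cdf_eq_real, measureReal_def, cond_apply hs, ENNReal.toReal_mul, ENNReal.toReal_inv,
    div_eq_inv_mul]
  rfl

lemma cdf_cond_le_of_mul_le (hs : MeasurableSet s) (hμs : μ s ≠ 0) (hνs : ν s ≠ 0) {t t' : ℝ}
    (h : ν (s ∩ Iic t) * μ (s \ Iic t') ≤ μ (s ∩ Iic t') * ν (s \ Iic t)) :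
    cdf (ν[|s]) t ≤ cdf (μ[|s]) t' := by
  have hμ := measureReal_inter_add_sdiff (μ := μ) (s := s) (measurableSet_Iic (a := t'))
  have hν := measureReal_inter_add_sdiff (μ := ν) (s := s) (measurableSet_Iic (a := t))
  have h' : ν.real (s ∩ Iic t) * μ.real (s \ Iic t') ≤
      μ.real (s ∩ Iic t') * ν.real (s \ Iic t) := by
    simp only [measureReal_def, ← ENNReal.toReal_mul]
    exact ENNReal.toReal_mono (by finiteness) h
  have hμ₀ : 0 < μ.real s := ENNReal.toReal_pos hμs (by finiteness)
  have hν₀ : 0 < ν.real s := ENNReal.toReal_pos hνs (by finiteness)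
  rw [cdf_cond_eq_div hs hνs, cdf_cond_eq_div hs hμs, div_le_div_iff₀ hν₀ hμ₀, ← hμ, ← hν]
  nlinarith

end Conditioning

lemma lintegral_mul_lintegral_le {α : Type*} [MeasurableSpace α] {μ : Measure α}
    {f g : α → ℝ≥0∞} (hf : Measurable f) (hg : Measurable g) {A B : Set α}
    (hA : MeasurableSet A) (hB : MeasurableSet B)
    (h : ∀ x ∈ A, ∀ y ∈ B, g x * f y ≤ f x * g y) :
    (∫⁻ x in A, g x ∂μ) * ∫⁻ y in B, f y ∂μ ≤ (∫⁻ x in A, f x ∂μ) * ∫⁻ y in B, g y ∂μ := by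
  rw [← lintegral_lintegral_mul hg.aemeasurable hf.aemeasurable,
    ← lintegral_lintegral_mul hf.aemeasurable hg.aemeasurable]
  exact setLIntegral_mono' hA fun x hx => setLIntegral_mono' hB fun y hy => h x hx y hy

lemma gaussianPDF_mul_le {a b : ℝ} (hab : a ≤ b) (v : ℝ≥0) {x y : ℝ} (hxy : x ≤ y) :
    gaussianPDF b v x * gaussianPDF a v y ≤ gaussianPDF a v x * gaussianPDF b v y := by
  simp only [gaussianPDF, ← ENNReal.ofReal_mul (gaussianPDFReal_nonneg _ _ _)]
  refine ENNReal.ofReal_le_ofReal ?_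
  simp only [gaussianPDFReal]
  rw [mul_mul_mul_comm, mul_mul_mul_comm _ (Real.exp _), ← Real.exp_add, ← Real.exp_add,
    ← add_div, ← add_div]
  refine mul_le_mul_of_nonneg_left (Real.exp_le_exp.2 ?_) (by positivity)
  refine div_le_div_of_nonneg_right ?_ (by positivity)
  nlinarith [mul_nonneg (sub_nonneg.2 hab) (sub_nonneg.2 hxy)]

lemma gaussianReal_mul_le {a b : ℝ} (hab : a ≤ b) {v : ℝ≥0} (hv : v ≠ 0) {A B : Set ℝ}
    (hA : MeasurableSet A) (hB : MeasurableSet B) (hAB : ∀ x ∈ A, ∀ y ∈ B, x ≤ y) :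
    gaussianReal b v A * gaussianReal a v B ≤ gaussianReal a v A * gaussianReal b v B := by
  simp only [gaussianReal_apply _ hv]
  exact lintegral_mul_lintegral_le (measurable_gaussianPDF a v) (measurable_gaussianPDF b v)
    hA hB fun x hx y hy => gaussianPDF_mul_le hab v (hAB x hx y hy)

section TruncatedGaussian

variable {v : ℝ≥0} {c d : ℝ}

lemma gaussianReal_Icc_ne_zero (m : ℝ) (hv : v ≠ 0) (hcd : c < d) :
    gaussianReal m v (Icc c d) ≠ 0 :=
  fun h => by simpa [hcd.not_ge] using gaussianReal_absolutelyContinuous' m hv h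

lemma cdf_gaussianReal_cond_le_of_le {a b : ℝ} (hab : a ≤ b) (hv : v ≠ 0) (hcd : c < d)
    (t : ℝ) :
    cdf ((gaussianReal b v)[|Icc c d]) t ≤ cdf ((gaussianReal a v)[|Icc c d]) t :=
  cdf_cond_le_of_mul_le measurableSet_Icc (gaussianReal_Icc_ne_zero a hv hcd)
    (gaussianReal_Icc_ne_zero b hv hcd) <|
    gaussianReal_mul_le hab hv (measurableSet_Icc.inter measurableSet_Iic)
      (measurableSet_Icc.diff measurableSet_Iic) fun _ hx _ hy => hx.2.trans (not_le.1 hy.2).le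

lemma cdf_gaussianReal_cond_le_add {a b : ℝ} (hab : a ≤ b) (hv : v ≠ 0) (hcd : c < d)
    (t : ℝ) :
    cdf ((gaussianReal a v)[|Icc c d]) t ≤ cdf ((gaussianReal b v)[|Icc c d]) (t + (b - a)) := by
  refine cdf_cond_le_of_mul_le measurableSet_Icc (gaussianReal_Icc_ne_zero b hv hcd)
    (gaussianReal_Icc_ne_zero a hv hcd) ?_
  have hshift : ∀ A, MeasurableSet A →
      gaussianReal a v A = gaussianReal b v ((· + (a - b)) ⁻¹' A) := fun A hA => by
    rw [← Measure.map_apply (measurable_add_const _) hA, gaussianReal_map_add_const,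
      add_sub_cancel]
  rcases lt_or_ge t c with htc | htc
  · have : Icc c d ∩ Iic t = ∅ :=
      eq_empty_of_forall_notMem fun x hx => by linarith [hx.1.1, mem_Iic.1 hx.2]
    simp [this]
  rcases le_or_gt d (t + (b - a)) with hdt | hdt
  · have : Icc c d \ Iic (t + (b - a)) = ∅ :=
      eq_empty_of_forall_notMem fun x hx => hx.2 (hx.1.2.trans hdt)
    simp [this]
  rw [hshift _ (measurableSet_Icc.inter measurableSet_Iic),
    hshift _ (measurableSet_Icc.diff measurableSet_Iic)]
  refine mul_le_mul' (measure_mono fun x hx => ?_) (measure_mono fun x hx => ?_)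
  · simp only [mem_preimage, mem_inter_iff, mem_Icc, mem_Iic] at hx ⊢
    refine ⟨⟨?_, ?_⟩, ?_⟩ <;> linarith
  · simp only [mem_preimage, Set.mem_sdiff, mem_Icc, mem_Iic, not_le] at hx ⊢
    refine ⟨⟨?_, ?_⟩, ?_⟩ <;> linarith

lemma cdf_gaussianReal_cond_le_add_abs (a b : ℝ) (hv : v ≠ 0) (hcd : c < d) (t : ℝ) :
    cdf ((gaussianReal a v)[|Icc c d]) t ≤ cdf ((gaussianReal b v)[|Icc c d]) (t + |a - b|) := by
  rcases le_total a b with hab | hba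
  · rw [abs_sub_comm, abs_of_nonneg (sub_nonneg.2 hab)]
    exact cdf_gaussianReal_cond_le_add hab hv hcd t
  · exact (cdf_gaussianReal_cond_le_of_le hba hv hcd t).trans
      (monotone_cdf _ (le_add_of_nonneg_right (abs_nonneg _)))

lemma exists_isCoupling_gaussianReal_cond (a b : ℝ) (hv : v ≠ 0) (hcd : c < d) :
    ∃ κ, IsProbabilityMeasure κ ∧
      IsCoupling κ ((gaussianReal a v)[|Icc c d]) ((gaussianReal b v)[|Icc c d]) ∧
      ∀ᵐ p ∂κ, |p.1 - p.2| ≤ |a - b| := by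
  have := cond_isProbabilityMeasure (gaussianReal_Icc_ne_zero a hv hcd)
  have := cond_isProbabilityMeasure (gaussianReal_Icc_ne_zero b hv hcd)
  exact exists_isCoupling_abs_sub_le (cdf_gaussianReal_cond_le_add_abs a b hv hcd)
    (abs_sub_comm a b ▸ cdf_gaussianReal_cond_le_add_abs b a hv hcd)

end TruncatedGaussian

end ProbabilityTheory

open Function Finset

lemma Finset.sum_sum_neighbours_eq_sum_card_nsmul {ι M : Type*} [Fintype ι] [AddCommMonoid M]
    (Nb : ι → Finset ι) (hNb : ∀ i j, j ∈ Nb i ↔ i ∈ Nb j) (f : ι → M) :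
    ∑ i, ∑ j ∈ Nb i, f j = ∑ j, #(Nb j) • f j := by
  rw [Finset.sum_comm' (t' := univ) (s' := Nb) fun i j => by simp [hNb i j]]
  simp only [sum_const]

lemma sum_sub_add_le_of_le_sum_neighbours {ι : Type*} [Fintype ι] (Nb : ι → Finset ι)
    (hNb : ∀ i j, j ∈ Nb i ↔ i ∈ Nb j) (a b : ι → ℝ) {ε : ℝ}
    (hb : ∀ i, #(Nb i) * b i ≤ (1 - ε) * ∑ j ∈ Nb i, a j) :
    ∑ i, (∑ j, #(Nb j) * a j - #(Nb i) * a i + #(Nb i) * b i) ≤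
      (Fintype.card ι - ε) * ∑ j, #(Nb j) * a j := by
  have hsum : ∑ i, ∑ j ∈ Nb i, a j = ∑ j, #(Nb j) * a j := by
    simp only [sum_sum_neighbours_eq_sum_card_nsmul Nb hNb, nsmul_eq_mul]
  calc _ ≤ ∑ i, (∑ j, #(Nb j) * a j - #(Nb i) * a i + (1 - ε) * ∑ j ∈ Nb i, a j) :=
        sum_le_sum fun i _ => add_le_add_right (hb i) _
    _ = _ := by
        rw [sum_add_distrib, sum_sub_distrib, ← mul_sum, hsum, sum_const, card_univ, nsmul_eq_mul]
        ring

lemma integrable_abs_sub_of_ae_le {κ : Measure (ℝ × ℝ)} [IsFiniteMeasure κ] {r : ℝ}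
    (hκ : ∀ᵐ p ∂κ, |p.1 - p.2| ≤ r) : Integrable (fun p : ℝ × ℝ => |p.1 - p.2|) κ :=
  Integrable.of_bound (by fun_prop) r (hκ.mono fun p hp => by rwa [Real.norm_eq_abs, abs_abs])

section Update

variable {ι : Type*} [Fintype ι] [DecidableEq ι] (w x z : ι → ℝ) (i : ι)

lemma sum_mul_abs_sub_update (a b : ℝ) :
    ∑ j, w j * |update x i a j - update z i b j| =
      ∑ j, w j * |x j - z j| - w i * |x i - z i| + w i * |a - b| := by
  have hupd : (fun j => w j * |update x i a j - update z i b j|) =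
      update (fun j => w j * |x j - z j|) i (w i * |a - b|) := by
    ext j
    rcases eq_or_ne j i with rfl | hj <;> simp [*]
  rw [hupd, sum_update_of_mem (mem_univ i), sum_eq_add_sum_sdiff_singleton_of_mem (mem_univ i)]
  ring

variable {κ : Measure (ℝ × ℝ)} {r : ℝ}

lemma integrable_sum_mul_abs_sub_map_update [IsFiniteMeasure κ]
    (hκ : ∀ᵐ p ∂κ, |p.1 - p.2| ≤ r) :
    Integrable (fun q : (ι → ℝ) × (ι → ℝ) => ∑ j, w j * |q.1 j - q.2 j|)
      (κ.map (Prod.map (update x i) (update z i))) := by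
  refine (integrable_map_measure (by fun_prop) (by fun_prop)).2 ?_
  simp only [comp_def, Prod.map_fst, Prod.map_snd, sum_mul_abs_sub_update]
  exact (integrable_const _).add ((integrable_abs_sub_of_ae_le hκ).const_mul _)

lemma integral_sum_mul_abs_sub_map_update_le [IsProbabilityMeasure κ] (hw : 0 ≤ w i)
    (hκ : ∀ᵐ p ∂κ, |p.1 - p.2| ≤ r) :
    ∫ q, ∑ j, w j * |q.1 j - q.2 j| ∂(κ.map (Prod.map (update x i) (update z i))) ≤
      ∑ j, w j * |x j - z j| - w i * |x i - z i| + w i * r := by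
  rw [integral_map (by fun_prop) (by fun_prop)]
  simp only [Prod.map_fst, Prod.map_snd, sum_mul_abs_sub_update]
  calc _ ≤ ∫ _, ∑ j, w j * |x j - z j| - w i * |x i - z i| + w i * r ∂κ :=
        integral_mono_ae ((integrable_const _).add ((integrable_abs_sub_of_ae_le hκ).const_mul _))
          (integrable_const _)
          (hκ.mono fun p hp => add_le_add_right (mul_le_mul_of_nonneg_left hp hw) _)
    _ = _ := by simp

end Update

lemma mul_abs_sub_gibbsMean_le {ι : Type*} {σ γ : ℝ} (hσ : σ ≠ 0) {k K : ℝ} (hk : 0 ≤ k)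
    (hkK : k ≤ K) (y : ℝ) (s : Finset ι) (x z : ι → ℝ) :
    k * |(σ⁻¹ ^ 2 + k * γ ^ 2)⁻¹ * (σ⁻¹ ^ 2 * y + γ ^ 2 * ∑ j ∈ s, x j) -
        (σ⁻¹ ^ 2 + k * γ ^ 2)⁻¹ * (σ⁻¹ ^ 2 * y + γ ^ 2 * ∑ j ∈ s, z j)| ≤
      (1 - (1 + K * γ ^ 2 * σ ^ 2)⁻¹) * ∑ j ∈ s, |x j - z j| := by
  have hA : 0 < σ⁻¹ ^ 2 + k * γ ^ 2 := by positivity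
  have hcoef : k * γ ^ 2 * (σ⁻¹ ^ 2 + k * γ ^ 2)⁻¹ ≤ 1 - (1 + K * γ ^ 2 * σ ^ 2)⁻¹ := by
    have hB : 0 < 1 + K * γ ^ 2 * σ ^ 2 := by have := hk.trans hkK; positivity
    have hσσ : σ⁻¹ ^ 2 * σ ^ 2 = 1 := by field_simp
    have hsub :
        1 - (1 + K * γ ^ 2 * σ ^ 2)⁻¹ = K * γ ^ 2 * σ ^ 2 / (1 + K * γ ^ 2 * σ ^ 2) := by
      field_simp
      ring
    rw [hsub, ← div_eq_mul_inv, div_le_div_iff₀ hA hB]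
    linear_combination γ ^ 2 * hkK - K * γ ^ 2 * hσσ
  calc _ = k * γ ^ 2 * (σ⁻¹ ^ 2 + k * γ ^ 2)⁻¹ * |∑ j ∈ s, (x j - z j)| := by
        rw [← mul_sub, abs_mul, abs_of_pos (inv_pos.2 hA), add_sub_add_left_eq_sub, ← mul_sub,
          abs_mul, abs_of_nonneg (sq_nonneg γ), sum_sub_distrib]
        ring
    _ ≤ (1 - (1 + K * γ ^ 2 * σ ^ 2)⁻¹) * ∑ j ∈ s, |x j - z j| :=
        mul_le_mul hcoef (abs_sum_le_sum_abs _ _) (abs_nonneg _)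
          ((by positivity : 0 ≤ k * γ ^ 2 * (σ⁻¹ ^ 2 + k * γ ^ 2)⁻¹).trans hcoef)

theorem stmt_17_general (N : ℕ) (hN : 0 < N)
    (Nb : Fin N → Finset (Fin N))                    -- neighbours of each pixel
    (hNb_symm : ∀ i j, j ∈ Nb i ↔ i ∈ Nb j)
    (n : Fin N → ℕ) (hn : ∀ i, n i = (Nb i).card)    -- number of neighbours
    (nmax : ℕ) (hnmax : nmax = Finset.univ.sup n)
    (σ γ : ℝ) (hσ : 0 < σ) (y : Fin N → ℝ)
    -- the full-conditional mean and variance at site `i` given the current state `x`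
    (m : Fin N → (Fin N → ℝ) → ℝ)
    (hm : m = fun i x => (σ⁻¹^2 + (n i : ℝ) * γ^2)⁻¹ *
      (σ⁻¹^2 * y i + γ^2 * ∑ j ∈ Nb i, x j))
    (v : Fin N → NNReal) (hv : ∀ i, (v i : ℝ) = (σ⁻¹^2 + (n i : ℝ) * γ^2)⁻¹)
    -- one step of the Gibbs sampler from state `x`: choose a site uniformly at random and
    -- resample it from the Normal full conditional truncated to `[0,1]`
    (step : (Fin N → ℝ) → Measure (Fin N → ℝ))
    (hstep : step = fun x => (N : ENNReal)⁻¹ •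
      ∑ i : Fin N, Measure.map (fun t => Function.update x i t)
        ((gaussianReal (m i x) (v i))[|Set.Icc (0:ℝ) 1]))
    -- the metric
    (d : (Fin N → ℝ) → (Fin N → ℝ) → ℝ)
    (hd : d = fun x z => ∑ i, (n i : ℝ) * |x i - z i|)
    (x z : Fin N → ℝ) :
    ∃ c : Measure ((Fin N → ℝ) × (Fin N → ℝ)),
      c.map Prod.fst = step x ∧ c.map Prod.snd = step z ∧
      ∫ p, d p.1 p.2 ∂c ≤ (1 - (N:ℝ)⁻¹ * (1 + (nmax:ℝ) * γ^2 * σ^2)⁻¹) * d x z := by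
  obtain rfl : n = fun i => #(Nb i) := funext hn
  have hv₀ (i : Fin N) : v i ≠ 0 := by
    rw [← NNReal.coe_ne_zero, hv i]
    positivity
  choose κ hκ hκc hκd using fun i =>
    exists_isCoupling_gaussianReal_cond (m i x) (m i z) (hv₀ i) zero_lt_one
  have hmean (i : Fin N) : (#(Nb i) : ℝ) * |m i x - m i z| ≤
      (1 - (1 + (nmax:ℝ) * γ^2 * σ^2)⁻¹) * ∑ j ∈ Nb i, |x j - z j| := by
    rw [hm]
    exact mul_abs_sub_gibbsMean_le hσ.ne' (Nat.cast_nonneg _)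
      (Nat.cast_le.2 (hnmax ▸ le_sup (f := fun i => #(Nb i)) (mem_univ i))) _ _ _ _
  obtain ⟨hc₁, hc₂⟩ := (IsCoupling.sum fun i _ =>
    (hκc i).map (measurable_update x (a := i)) (measurable_update z (a := i))).smul (N : ℝ≥0∞)⁻¹
  subst hstep hd
  refine ⟨_, hc₁, hc₂, ?_⟩
  rw [integral_smul_measure, integral_finsetSum_measure fun i _ =>
    integrable_sum_mul_abs_sub_map_update _ x z i (hκd i), ENNReal.toReal_inv,
    ENNReal.toReal_natCast, smul_eq_mul]
  calc _ ≤ (N : ℝ)⁻¹ * ∑ i, (∑ j, (#(Nb j) : ℝ) * |x j - z j| - #(Nb i) * |x i - z i| +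
          #(Nb i) * |m i x - m i z|) := by
        gcongr with i
        exact integral_sum_mul_abs_sub_map_update_le _ x z i (Nat.cast_nonneg _) (hκd i)
    _ ≤ (N : ℝ)⁻¹ * ((N - (1 + (nmax:ℝ) * γ^2 * σ^2)⁻¹) * ∑ j, (#(Nb j) : ℝ) * |x j - z j|) := by
        gcongr
        have := sum_sub_add_le_of_le_sum_neighbours Nb hNb_symm (fun j => |x j - z j|) _ hmean
        rwa [Fintype.card_fin] at this
    _ = _ := by
        rw [← mul_assoc, mul_sub, inv_mul_cancel₀ (Nat.cast_ne_zero.2 hN.ne')]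

theorem stmt_17 (N : ℕ) (hN : 0 < N)
    (Nb : Fin N → Finset (Fin N))                    -- neighbours of each pixel
    (hNb_symm : ∀ i j, j ∈ Nb i ↔ i ∈ Nb j) (hNb_irr : ∀ i, i ∉ Nb i)
    (hNb_pos : ∀ i, 1 ≤ (Nb i).card)
    (n : Fin N → ℕ) (hn : ∀ i, n i = (Nb i).card)    -- number of neighbours
    (nmax : ℕ) (hnmax : nmax = Finset.univ.sup n)
    (σ γ : ℝ) (hσ : 0 < σ) (hγ : 0 < γ) (y : Fin N → ℝ)
    -- the full-conditional mean and variance at site `i` given the current state `x`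
    (m : Fin N → (Fin N → ℝ) → ℝ)
    (hm : m = fun i x => (σ⁻¹^2 + (n i : ℝ) * γ^2)⁻¹ *
      (σ⁻¹^2 * y i + γ^2 * ∑ j ∈ Nb i, x j))
    (v : Fin N → NNReal) (hv : ∀ i, (v i : ℝ) = (σ⁻¹^2 + (n i : ℝ) * γ^2)⁻¹)
    -- one step of the Gibbs sampler from state `x`: choose a site uniformly at random and
    -- resample it from the Normal full conditional truncated to `[0,1]`
    (step : (Fin N → ℝ) → Measure (Fin N → ℝ))
    (hstep : step = fun x => (N : ENNReal)⁻¹ •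
      ∑ i : Fin N, Measure.map (fun t => Function.update x i t)
        ((gaussianReal (m i x) (v i))[|Set.Icc (0:ℝ) 1]))
    -- the metric
    (d : (Fin N → ℝ) → (Fin N → ℝ) → ℝ)
    (hd : d = fun x z => ∑ i, (n i : ℝ) * |x i - z i|)
    (x z : Fin N → ℝ) (hx : ∀ i, x i ∈ Set.Icc (0:ℝ) 1) (hz : ∀ i, z i ∈ Set.Icc (0:ℝ) 1) :
    ∃ c : Measure ((Fin N → ℝ) × (Fin N → ℝ)),
      c.map Prod.fst = step x ∧ c.map Prod.snd = step z ∧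
      ∫ p, d p.1 p.2 ∂c ≤ (1 - (N:ℝ)⁻¹ * (1 + (nmax:ℝ) * γ^2 * σ^2)⁻¹) * d x z :=
  stmt_17_general N hN Nb hNb_symm n hn nmax hnmax σ γ hσ y m hm v hv step hstep d hd x z
end
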